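/- Let p ≥ n > 1 be real, and let c_{pn}(z,u) := 2z(4−z)(1−u)^{2n+2} u^{2n} [(1 − zu + zu²)^{p/2} − (1−u)^p]² / ([(1−u)^{2n} u² + (1−u)² u^{2n}][(1−u)^p u^n + (1−u)^n u^p]²) on [0,4] × (0,1), extended by c_{pn}(z,0) := p² z(4−z)(2−z)²/(2(1+3δ_{pn})) and c_{pn}(z,1) := 2z(4−z)/(1+3δ_{pn}). Then for all nonzero h, ℓ ∈ ℝ^d, with z, u defined by cos θ_{hℓ} = 1 − z/2 and |h| = (u/(1−u))|ℓ|, it holds that (|h+ℓ|^p − |ℓ|^p)² sin² θ_{hℓ} / (|h|^p |ℓ|^{n−1} + |h|^n |ℓ|^{p−1})² = (c_{pn}(z,u)/8)(1/|h|^{2n−2} + 1/|ℓ|^{2n−2}). -/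

import Mathlib

open scoped BigOperators
noncomputable section

/-- Kronecker delta `δ_{pn}`. -/
def kdelta (p n : ℝ) : ℝ := if p = n then 1 else 0

/-- The function `c_{pn}` on `[0,4] × [0,1]`, extended by its boundary values at `u = 0, 1`. -/
def cpn (p n : ℝ) (z u : ℝ) : ℝ :=
  if u = 0 then p ^ 2 * z * (4 - z) * (2 - z) ^ 2 / (2 * (1 + 3 * kdelta p n))
  else if u = 1 then 2 * z * (4 - z) / (1 + 3 * kdelta p n)
  else 2 * z * (4 - z) * (1 - u) ^ (2 * n + 2) * u ^ (2 * n) *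
      ((1 - z * u + z * u ^ 2) ^ (p / 2) - (1 - u) ^ p) ^ 2 /
    (((1 - u) ^ (2 * n) * u ^ 2 + (1 - u) ^ 2 * u ^ (2 * n)) *
      ((1 - u) ^ p * u ^ n + (1 - u) ^ n * u ^ p) ^ 2)

/-!
Put `x = ‖h‖`, `y = ‖ℓ‖`. The hypothesis on `u` says `u = x / (x + y)`, and the law of cosines
gives `‖h + ℓ‖² = (x + y)² - z x y = (x + y)² (1 - z u + z u²)`. Since `c_{pn}` is homogeneous of
degree `0` in `(u, 1 - u, (1 - z u + z u²)^{1/2})`, these three may be replaced by `x`, `y` and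
`‖h + ℓ‖`. With `sin² θ = z (4 - z) / 4` the claim becomes a rational identity in
`x, y, xⁿ, xᵖ, yⁿ, yᵖ, ‖h + ℓ‖ᵖ`.
-/

open Real InnerProductGeometry

lemma norm_add_sq_eq_of_cos_angle {V : Type*} [NormedAddCommGroup V] [InnerProductSpace ℝ V]
    {h ℓ : V} {z : ℝ} (hz : cos (angle h ℓ) = 1 - z / 2) :
    ‖h + ℓ‖ ^ 2 = (‖h‖ + ‖ℓ‖) ^ 2 - z * ‖h‖ * ‖ℓ‖ := by
  rw [norm_add_sq_real, ← cos_angle_mul_norm_mul_norm, hz]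
  ring

lemma sin_sq_eq_of_cos_eq {θ z : ℝ} (hz : cos θ = 1 - z / 2) : sin θ ^ 2 = z * (4 - z) / 4 := by
  rw [sin_sq, hz]
  ring

lemma Real.rpow_two_mul {x : ℝ} (hx : 0 < x) (n : ℝ) : x ^ (2 * n) = (x ^ n) ^ 2 := by
  rw [two_mul, rpow_add hx, sq]

lemma Real.rpow_two_mul_add_two {x : ℝ} (hx : 0 < x) (n : ℝ) :
    x ^ (2 * n + 2) = (x ^ n) ^ 2 * x ^ 2 := by
  rw [rpow_add hx, rpow_two_mul hx, rpow_two]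

lemma Real.rpow_two_mul_sub_two {x : ℝ} (hx : 0 < x) (n : ℝ) :
    x ^ (2 * n - 2) = (x ^ n) ^ 2 / x ^ 2 := by
  rw [rpow_sub hx, rpow_two_mul hx, rpow_two]

lemma cpn_div_add {p n x y r z : ℝ} (hx : 0 < x) (hy : 0 < y) (hr : 0 ≤ r)
    (hr2 : r ^ 2 = (x + y) ^ 2 - z * x * y) :
    cpn p n z (x / (x + y)) =
      2 * z * (4 - z) * y ^ (2 * n + 2) * x ^ (2 * n) * (r ^ p - y ^ p) ^ 2 /
        ((y ^ (2 * n) * x ^ 2 + y ^ 2 * x ^ (2 * n)) * (y ^ p * x ^ n + y ^ n * x ^ p) ^ 2) := by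
  have hs : 0 < x + y := by positivity
  have hu0 : x / (x + y) ≠ 0 := by positivity
  have hu1 : x / (x + y) ≠ 1 := by
    rw [Ne, div_eq_one_iff_eq hs.ne']
    linarith
  have hsub : 1 - x / (x + y) = y / (x + y) := by
    field_simp
    ring
  have hQ : 1 - z * (x / (x + y)) + z * (x / (x + y)) ^ 2 = (r / (x + y)) ^ 2 := by
    rw [div_pow r, hr2]
    field_simp
    ring
  rw [cpn, if_neg hu0, if_neg hu1, hsub, hQ, rpow_div_two_eq_sqrt _ (sq_nonneg _),
    sqrt_sq (div_nonneg hr hs.le)]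
  simp only [div_rpow hx.le hs.le, div_rpow hy.le hs.le, div_rpow hr hs.le, rpow_two_mul hx,
    rpow_two_mul hy, rpow_two_mul hs, rpow_two_mul_add_two hy, rpow_two_mul_add_two hs]
  field_simp

lemma sq_rpow_sub_mul_div_eq_cpn {p n x y r z : ℝ} (hx : 0 < x) (hy : 0 < y) (hr : 0 ≤ r)
    (hr2 : r ^ 2 = (x + y) ^ 2 - z * x * y) :
    (r ^ p - y ^ p) ^ 2 * (z * (4 - z) / 4) / (x ^ p * y ^ (n - 1) + x ^ n * y ^ (p - 1)) ^ 2 =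
      cpn p n z (x / (x + y)) / 8 * (1 / x ^ (2 * n - 2) + 1 / y ^ (2 * n - 2)) := by
  rw [cpn_div_add hx hy hr hr2]
  simp only [rpow_two_mul hx, rpow_two_mul hy, rpow_two_mul_add_two hy, rpow_two_mul_sub_two hx,
    rpow_two_mul_sub_two hy, rpow_sub_one hy.ne']
  field_simp
  ring

theorem cpn_identity_general (d : ℕ) (p n : ℝ)
    (h ℓ : EuclideanSpace ℝ (Fin d)) (hℓ : ℓ ≠ 0) (z u : ℝ)
    (hu0 : 0 < u) (hu1 : u < 1)
    (hz : Real.cos (InnerProductGeometry.angle h ℓ) = 1 - z / 2)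
    (hu : ‖h‖ = u / (1 - u) * ‖ℓ‖) :
    (‖h + ℓ‖ ^ p - ‖ℓ‖ ^ p) ^ 2 * Real.sin (InnerProductGeometry.angle h ℓ) ^ 2 /
        (‖h‖ ^ p * ‖ℓ‖ ^ (n - 1) + ‖h‖ ^ n * ‖ℓ‖ ^ (p - 1)) ^ 2 =
      cpn p n z u / 8 * (1 / ‖h‖ ^ (2 * n - 2) + 1 / ‖ℓ‖ ^ (2 * n - 2)) := by
  have hℓ_pos : 0 < ‖ℓ‖ := norm_pos_iff.mpr hℓ
  have h1u : 0 < 1 - u := by linarith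
  have hh_pos : 0 < ‖h‖ := by
    rw [hu]
    positivity
  have hu_eq : u = ‖h‖ / (‖h‖ + ‖ℓ‖) := by
    rw [eq_div_iff (by positivity), hu]
    field_simp
    ring
  rw [sin_sq_eq_of_cos_eq hz, hu_eq]
  exact sq_rpow_sub_mul_div_eq_cpn hh_pos hℓ_pos (norm_nonneg _) (norm_add_sq_eq_of_cos_angle hz)

/-- For real `p ≥ n > 1` and nonzero `h, ℓ ∈ ℝ^d`, with `z, u` defined by
`cos θ_{hℓ} = 1 - z/2` and `|h| = (u/(1-u))|ℓ|` (so `u ∈ (0,1)`), one has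
`(|h+ℓ|^p - |ℓ|^p)² sin² θ_{hℓ} / (|h|^p|ℓ|^{n-1} + |h|^n|ℓ|^{p-1})²
  = (c_{pn}(z,u)/8)(|h|^{-(2n-2)} + |ℓ|^{-(2n-2)})`. -/
theorem cpn_identity (d : ℕ) (p n : ℝ) (hpn : n ≤ p) (hn : 1 < n)
    (h ℓ : EuclideanSpace ℝ (Fin d)) (hh : h ≠ 0) (hℓ : ℓ ≠ 0) (z u : ℝ)
    (hu0 : 0 < u) (hu1 : u < 1)
    (hz : Real.cos (InnerProductGeometry.angle h ℓ) = 1 - z / 2)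
    (hu : ‖h‖ = u / (1 - u) * ‖ℓ‖) :
    (‖h + ℓ‖ ^ p - ‖ℓ‖ ^ p) ^ 2 * Real.sin (InnerProductGeometry.angle h ℓ) ^ 2 /
        (‖h‖ ^ p * ‖ℓ‖ ^ (n - 1) + ‖h‖ ^ n * ‖ℓ‖ ^ (p - 1)) ^ 2 =
      cpn p n z u / 8 * (1 / ‖h‖ ^ (2 * n - 2) + 1 / ‖ℓ‖ ^ (2 * n - 2)) :=
  cpn_identity_general d p n h ℓ hℓ z u hu0 hu1 hz hu
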